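/- For any functions a, a', b, b' taking values in {−1, +1} and any probability measure μ on a hidden-variable space Λ, the CHSH quantity |E(a,b) + E(a,b') + E(a',b) − E(a',b')| ≤ 2, where E(x,y) = ∫_Λ x(λ)y(λ) dμ(λ). -/

import Mathlib

noncomputable section
open scoped ComplexConjugate

abbrev Q1 := EuclideanSpace ℂ (Fin 2)
abbrev Qb2 := EuclideanSpace ℂ (Fin 2 × Fin 2)
abbrev Qb3 := EuclideanSpace ℂ (Fin 2 × Fin 2 × Fin 2)
abbrev Qb4 := EuclideanSpace ℂ (Fin 2 × Fin 2 × Fin 2 × Fin 2)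

/-- computational basis vector of one qubit -/
def ket (i : Fin 2) : Q1 := WithLp.toLp 2 <| fun j => if j = i then 1 else 0
def ket2 (i j : Fin 2) : Qb2 := WithLp.toLp 2 <| fun p => (if p.1 = i then 1 else 0) * (if p.2 = j then 1 else 0)
def ket3 (i j k : Fin 2) : Qb3 := WithLp.toLp 2 <| fun p =>
  (if p.1 = i then 1 else 0) * (if p.2.1 = j then 1 else 0) * (if p.2.2 = k then 1 else 0)
def ket4 (i j k l : Fin 2) : Qb4 := WithLp.toLp 2 <| fun p =>
  (if p.1 = i then 1 else 0) * (if p.2.1 = j then 1 else 0) *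
  (if p.2.2.1 = k then 1 else 0) * (if p.2.2.2 = l then 1 else 0)

/-- tensor product of two single-qubit vectors -/
def tp (u v : Q1) : Qb2 := WithLp.toLp 2 <| fun p => u p.1 * v p.2
/-- tensor product of two two-qubit vectors: u on factors (1,2), v on factors (3,4) -/
def tp22 (u v : Qb2) : Qb4 := WithLp.toLp 2 <| fun p => u (p.1, p.2.1) * v (p.2.2.1, p.2.2.2)

def sqrt2 : ℂ := (Real.sqrt 2 : ℝ)

def psiM : Qb2 := sqrt2⁻¹ • (ket2 0 1 - ket2 1 0)
def psiP : Qb2 := sqrt2⁻¹ • (ket2 0 1 + ket2 1 0)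
def phiM : Qb2 := sqrt2⁻¹ • (ket2 0 0 - ket2 1 1)
def phiP : Qb2 := sqrt2⁻¹ • (ket2 0 0 + ket2 1 1)

/-- |Ψ⁻⟩₁₂ ⊗ |Ψ⁻⟩₃₄ -/
def bigPsi : Qb4 := tp22 psiM psiM

/-- reorder a vector given in factor order (1,4,2,3) into factor order (1,2,3,4) -/
def reord (v : Qb4) : Qb4 := WithLp.toLp 2 <| fun p => v (p.1, p.2.2.2, p.2.1, p.2.2.1)

def outer2 (v : Qb2) : Matrix (Fin 2 × Fin 2) (Fin 2 × Fin 2) ℂ := fun p q => v p * conj (v q)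
def outer4 (v : Qb4) :
    Matrix (Fin 2 × Fin 2 × Fin 2 × Fin 2) (Fin 2 × Fin 2 × Fin 2 × Fin 2) ℂ :=
  fun p q => v p * conj (v q)

/-- partial trace over tensor factors 2 and 3 -/
def ptrace23 (M : Matrix (Fin 2 × Fin 2 × Fin 2 × Fin 2) (Fin 2 × Fin 2 × Fin 2 × Fin 2) ℂ) :
    Matrix (Fin 2 × Fin 2) (Fin 2 × Fin 2) ℂ :=
  fun x y => ∑ b : Fin 2, ∑ c : Fin 2, M (x.1, b, c, x.2) (y.1, b, c, y.2)

/-- partial trace over the second factor -/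
def ptrace2 (M : Matrix (Fin 2 × Fin 2) (Fin 2 × Fin 2) ℂ) : Matrix (Fin 2) (Fin 2) ℂ :=
  fun a a' => ∑ b : Fin 2, M (a, b) (a', b)

/-- Kronecker product of 2×2 matrices -/
def kron (A B : Matrix (Fin 2) (Fin 2) ℂ) :
    Matrix (Fin 2 × Fin 2) (Fin 2 × Fin 2) ℂ :=
  fun p q => A p.1 q.1 * B p.2 q.2

/-- apply a matrix to a vector -/
def applyM {I : Type} [Fintype I] (M : Matrix I I ℂ) (v : EuclideanSpace ℂ I) :
    EuclideanSpace ℂ I := WithLp.toLp 2 <| fun p => ∑ q, M p q * v q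

/-- the operator I₁ ⊗ |β⟩⟨β|^{(2,3)} ⊗ I₄ applied to a four-qubit vector -/
def projOn23 (β : Qb2) (v : Qb4) : Qb4 := WithLp.toLp 2 <| fun p =>
  β (p.2.1, p.2.2.1) * ∑ b : Fin 2, ∑ c : Fin 2, conj (β (b, c)) * v (p.1, b, c, p.2.2.2)

/-- lift an operator on factors (2,3) to the four-qubit space -/
def lift23 (P : Matrix (Fin 2 × Fin 2) (Fin 2 × Fin 2) ℂ) :
    Matrix (Fin 2 × Fin 2 × Fin 2 × Fin 2) (Fin 2 × Fin 2 × Fin 2 × Fin 2) ℂ :=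
  fun p q => (if p.1 = q.1 then 1 else 0) * (if p.2.2.2 = q.2.2.2 then 1 else 0) *
    P (p.2.1, p.2.2.1) (q.2.1, q.2.2.1)

def σx : Matrix (Fin 2) (Fin 2) ℂ := !![0, 1; 1, 0]
def σy : Matrix (Fin 2) (Fin 2) ℂ := !![0, -Complex.I; Complex.I, 0]
def σz : Matrix (Fin 2) (Fin 2) ℂ := !![1, 0; 0, -1]

/-! Writing the integrand as `a (b + b') + a' (b - b')`, it is bounded by `|b + b'| + |b - b'| =
2 max |b| |b'| ≤ 2` pointwise, and averaging against a probability measure preserves the bound. -/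

theorem abs_chsh_le_two {a a' b b' : ℝ} (ha : |a| ≤ 1) (ha' : |a'| ≤ 1) (hb : |b| ≤ 1)
    (hb' : |b'| ≤ 1) : |a * b + a * b' + a' * b - a' * b'| ≤ 2 := by
  have hsum : |b + b'| + |b - b'| ≤ 2 := by
    rw [abs_le] at hb hb'
    rcases abs_cases (b + b') with ⟨h₁, -⟩ | ⟨h₁, -⟩ <;>
      rcases abs_cases (b - b') with ⟨h₂, -⟩ | ⟨h₂, -⟩ <;> linarith
  calc |a * b + a * b' + a' * b - a' * b'| = |a * (b + b') + a' * (b - b')| := by ring_nf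
    _ ≤ |a| * |b + b'| + |a'| * |b - b'| := by
        simpa only [abs_mul] using abs_add_le (a * (b + b')) (a' * (b - b'))
    _ ≤ 1 * |b + b'| + 1 * |b - b'| := by gcongr
    _ ≤ 2 := by linarith

theorem abs_le_one_of_eq_neg_one_or_eq_one {x : ℝ} (h : x = -1 ∨ x = 1) : |x| ≤ 1 := by
  rcases h with rfl | rfl <;> simp

namespace MeasureTheory

variable {Λ : Type*} [MeasurableSpace Λ] {μ : Measure Λ}

theorem integrable_mul_of_abs_le_one [IsFiniteMeasure μ] {f g : Λ → ℝ} (hf : Measurable f)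
    (hg : Measurable g) (hf₁ : ∀ l, |f l| ≤ 1) (hg₁ : ∀ l, |g l| ≤ 1) :
    Integrable (fun l => f l * g l) μ :=
  .of_bound (hf.mul hg).aestronglyMeasurable 1 <| .of_forall fun l => by
    simpa only [Real.norm_eq_abs, abs_mul] using mul_le_one₀ (hf₁ l) (abs_nonneg _) (hg₁ l)

theorem abs_integral_chsh_le_two [IsProbabilityMeasure μ] {a a' b b' : Λ → ℝ}
    (hma : Measurable a) (hma' : Measurable a') (hmb : Measurable b) (hmb' : Measurable b')
    (ha : ∀ l, |a l| ≤ 1) (ha' : ∀ l, |a' l| ≤ 1) (hb : ∀ l, |b l| ≤ 1) (hb' : ∀ l, |b' l| ≤ 1) :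
    |(∫ l, a l * b l ∂μ) + (∫ l, a l * b' l ∂μ) + (∫ l, a' l * b l ∂μ)
      - (∫ l, a' l * b' l ∂μ)| ≤ 2 := by
  have i₁ := integrable_mul_of_abs_le_one (μ := μ) hma hmb ha hb
  have i₂ := integrable_mul_of_abs_le_one (μ := μ) hma hmb' ha hb'
  have i₃ := integrable_mul_of_abs_le_one (μ := μ) hma' hmb ha' hb
  have i₄ := integrable_mul_of_abs_le_one (μ := μ) hma' hmb' ha' hb'
  have hlin : (∫ l, a l * b l ∂μ) + (∫ l, a l * b' l ∂μ) + (∫ l, a' l * b l ∂μ)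
      - (∫ l, a' l * b' l ∂μ) = ∫ l, a l * b l + a l * b' l + a' l * b l - a' l * b' l ∂μ := by
    rw [integral_sub, integral_add, integral_add] <;> fun_prop
  have hbound : ∀ᵐ l ∂μ, ‖a l * b l + a l * b' l + a' l * b l - a' l * b' l‖ ≤ 2 :=
    .of_forall fun l => abs_chsh_le_two (ha l) (ha' l) (hb l) (hb' l)
  simpa [hlin] using norm_integral_le_of_norm_le_const hbound

end MeasureTheory

open MeasureTheory in
theorem chsh_hidden_variable {Λ : Type} [MeasurableSpace Λ]
    (μ : Measure Λ) [IsProbabilityMeasure μ]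
    (a a' b b' : Λ → ℝ)
    (hma : Measurable a) (hma' : Measurable a') (hmb : Measurable b) (hmb' : Measurable b')
    (ha : ∀ l, a l = -1 ∨ a l = 1) (ha' : ∀ l, a' l = -1 ∨ a' l = 1)
    (hb : ∀ l, b l = -1 ∨ b l = 1) (hb' : ∀ l, b' l = -1 ∨ b' l = 1) :
    |(∫ l, a l * b l ∂μ) + (∫ l, a l * b' l ∂μ) + (∫ l, a' l * b l ∂μ)
      - (∫ l, a' l * b' l ∂μ)| ≤ 2 := by
  have habs {x : ℝ} := abs_le_one_of_eq_neg_one_or_eq_one (x := x)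
  exact abs_integral_chsh_le_two hma hma' hmb hmb' (fun l => habs (ha l)) (fun l => habs (ha' l))
    (fun l => habs (hb l)) (fun l => habs (hb' l))
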